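/- arXiv:2502.06159 — 7 statements merged into one kernel-verified Lean document; each statement's English description precedes it below -/
import Mathlib

section
/- The functions g and h are componentwise nondecreasing on their domain of definition: if 0 ≤ x₁ ≤ x₂ and 0 ≤ y₁ ≤ y₂ and ℙ[E(x₂,y₂)] > 0 (hence also ℙ[E(x₁,y₁)] > 0), then g(x₁,y₁) ≤ g(x₂,y₂) and h(x₁,y₁) ≤ h(x₂,y₂). -/
/-! Raising either load pushes both thresholds `x + β_B·y` and `y + β_A·x` up, so the survival
event shrinks. Writing `t = 1 - p ∈ (0, 1]`, the quantity `(𝔼[L] − t·𝔼[L·1_E]) / (t·ℙ[E])` only grows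
when `E` shrinks: the numerator grows because `L ≥ 0`, and stays nonnegative because
`t·𝔼[L·1_E] ≤ 𝔼[L]`, while the denominator falls. -/

open MeasureTheory ProbabilityTheory

variable {Ω : Type*} [MeasureSpace Ω]

/-- The survival event `E(x,y) = {S_A > x + β_B·y} ∩ {S_B > y + β_A·x}`. -/
def survEvent (SA SB : Ω → ℝ) (βA βB x y : ℝ) : Set Ω :=
  {ω | x + βB * y < SA ω} ∩ {ω | y + βA * x < SB ω}

/-- `g(x,y) = (𝔼[L] − (1−p)·𝔼[L·1_{E(x,y)}]) / ((1−p)·ℙ[E(x,y)])`; with `L = L_A` this is the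
function `g` of the paper, with `L = L_B` it is the function `h`. -/
noncomputable def gFun (L SA SB : Ω → ℝ) (βA βB p x y : ℝ) : ℝ :=
  ((∫ ω, L ω) - (1 - p) * ∫ ω in survEvent SA SB βA βB x y, L ω) /
    ((1 - p) * ((ℙ : Measure Ω) (survEvent SA SB βA βB x y)).toReal)

/-- The set 𝒫 of stable points. -/
noncomputable def stableSet (LA LB SA SB : Ω → ℝ) (βA βB p : ℝ) : Set (ℝ × ℝ) :=
  {q | 0 ≤ q.1 ∧ 0 ≤ q.2 ∧ 0 < (ℙ : Measure Ω) (survEvent SA SB βA βB q.1 q.2) ∧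
    gFun LA SA SB βA βB p q.1 q.2 ≤ q.1 ∧ gFun LB SA SB βA βB p q.1 q.2 ≤ q.2}

lemma sub_mul_div_mul_le_sub_mul_div_mul {I a₁ a₂ r₁ r₂ t : ℝ} (ht₀ : 0 < t) (ht₁ : t ≤ 1)
    (hr₂ : 0 < r₂) (hr : r₂ ≤ r₁) (ha₂ : 0 ≤ a₂) (ha : a₂ ≤ a₁) (ha₂I : a₂ ≤ I) :
    (I - t * a₁) / (t * r₁) ≤ (I - t * a₂) / (t * r₂) := by
  have hr₁ : 0 < r₁ := hr₂.trans_le hr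
  have hnum : 0 ≤ I - t * a₂ := by nlinarith
  calc (I - t * a₁) / (t * r₁) ≤ (I - t * a₂) / (t * r₁) := by gcongr
    _ ≤ (I - t * a₂) / (t * r₂) := by gcongr

lemma integral_sub_setIntegral_div_le_of_subset {α : Type*} [MeasurableSpace α] {μ : Measure α}
    [IsFiniteMeasure μ] {L : α → ℝ} (hL₀ : ∀ ω, 0 ≤ L ω) (hL : Integrable L μ) {E₁ E₂ : Set α}
    (hsub : E₂ ⊆ E₁) (hE₂ : 0 < μ E₂) {t : ℝ} (ht₀ : 0 < t) (ht₁ : t ≤ 1) :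
    ((∫ ω, L ω ∂μ) - t * ∫ ω in E₁, L ω ∂μ) / (t * (μ E₁).toReal) ≤
      ((∫ ω, L ω ∂μ) - t * ∫ ω in E₂, L ω ∂μ) / (t * (μ E₂).toReal) := by
  have hL₀' : 0 ≤ᵐ[μ] L := Filter.Eventually.of_forall hL₀
  exact sub_mul_div_mul_le_sub_mul_div_mul ht₀ ht₁
    (ENNReal.toReal_pos hE₂.ne' (measure_ne_top μ E₂))
    (ENNReal.toReal_mono (measure_ne_top μ E₁) (measure_mono hsub))
    (setIntegral_nonneg_of_ae hL₀')
    (setIntegral_mono_set hL.integrableOn (ae_restrict_of_ae hL₀') hsub.eventuallyLE)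
    (setIntegral_le_integral hL hL₀')

lemma survEvent_subset_survEvent {α : Type*} {SA SB : α → ℝ} {βA βB x₁ x₂ y₁ y₂ : ℝ} (hβA : 0 ≤ βA)
    (hβB : 0 ≤ βB) (hx : x₁ ≤ x₂) (hy : y₁ ≤ y₂) :
    survEvent SA SB βA βB x₂ y₂ ⊆ survEvent SA SB βA βB x₁ y₁ := by
  rintro ω ⟨hA, hB⟩
  exact ⟨(add_le_add hx (mul_le_mul_of_nonneg_left hy hβB)).trans_lt hA,
    (add_le_add hy (mul_le_mul_of_nonneg_left hx hβA)).trans_lt hB⟩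

lemma gFun_le_gFun [IsProbabilityMeasure (ℙ : Measure Ω)] {L SA SB : Ω → ℝ}
    (hL₀ : ∀ ω, 0 ≤ L ω) (hL : Integrable L (ℙ : Measure Ω)) {βA βB p x₁ x₂ y₁ y₂ : ℝ}
    (hβA : 0 ≤ βA) (hβB : 0 ≤ βB) (hp₀ : 0 ≤ p) (hp₁ : p < 1) (hx : x₁ ≤ x₂) (hy : y₁ ≤ y₂)
    (hpos : 0 < (ℙ : Measure Ω) (survEvent SA SB βA βB x₂ y₂)) :
    gFun L SA SB βA βB p x₁ y₁ ≤ gFun L SA SB βA βB p x₂ y₂ :=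
  integral_sub_setIntegral_div_le_of_subset hL₀ hL (survEvent_subset_survEvent hβA hβB hx hy)
    hpos (by linarith) (by linarith)

theorem stmt1_general [IsProbabilityMeasure (ℙ : Measure Ω)]
    (LA LB SA SB : Ω → ℝ)
    (hLA0 : ∀ ω, 0 ≤ LA ω) (hLB0 : ∀ ω, 0 ≤ LB ω)
    (hLA : Integrable LA (ℙ : Measure Ω)) (hLB : Integrable LB (ℙ : Measure Ω))
    (βA βB : ℝ) (hβA : 0 ≤ βA) (hβB : 0 ≤ βB)
    (p : ℝ) (hp0 : 0 < p) (hp1 : p < 1)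
    (x₁ x₂ y₁ y₂ : ℝ) (hx : x₁ ≤ x₂) (hy : y₁ ≤ y₂)
    (hpos : 0 < (ℙ : Measure Ω) (survEvent SA SB βA βB x₂ y₂)) :
    gFun LA SA SB βA βB p x₁ y₁ ≤ gFun LA SA SB βA βB p x₂ y₂ ∧
    gFun LB SA SB βA βB p x₁ y₁ ≤ gFun LB SA SB βA βB p x₂ y₂ :=
  ⟨gFun_le_gFun hLA0 hLA hβA hβB hp0.le hp1 hx hy hpos,
    gFun_le_gFun hLB0 hLB hβA hβB hp0.le hp1 hx hy hpos⟩

theorem stmt1 [IsProbabilityMeasure (ℙ : Measure Ω)]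
    (LA LB SA SB : Ω → ℝ)
    (hLA0 : ∀ ω, 0 ≤ LA ω) (hLB0 : ∀ ω, 0 ≤ LB ω)
    (hLA : Integrable LA (ℙ : Measure Ω)) (hLB : Integrable LB (ℙ : Measure Ω))
    (hSA : Measurable SA) (hSB : Measurable SB)
    (βA βB : ℝ) (hβA : 0 ≤ βA) (hβB : 0 ≤ βB)
    (p : ℝ) (hp0 : 0 < p) (hp1 : p < 1)
    (x₁ x₂ y₁ y₂ : ℝ) (hx₁ : 0 ≤ x₁) (hx : x₁ ≤ x₂) (hy₁ : 0 ≤ y₁) (hy : y₁ ≤ y₂)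
    (hpos : 0 < (ℙ : Measure Ω) (survEvent SA SB βA βB x₂ y₂)) :
    gFun LA SA SB βA βB p x₁ y₁ ≤ gFun LA SA SB βA βB p x₂ y₂ ∧
    gFun LB SA SB βA βB p x₁ y₁ ≤ gFun LB SA SB βA βB p x₂ y₂ :=
  stmt1_general LA LB SA SB hLA0 hLB0 hLA hLB βA βB hβA hβB p hp0 hp1 x₁ x₂ y₁ y₂ hx hy hpos
end

section
/- (Lemma 2 of the paper.) The set of stable points 𝒫 is closed under componentwise minimum: if P₁ = (a₁,b₁) ∈ 𝒫 and P₂ = (a₂,b₂) ∈ 𝒫, then P₃ = (min(a₁,a₂), min(b₁,b₂)) ∈ 𝒫. -/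
open MeasureTheory ProbabilityTheory

variable {Ω : Type*} [MeasureSpace Ω]

lemma survEvent_mono (SA SB : Ω → ℝ) {βA βB x y x' y' : ℝ} (hβA : 0 ≤ βA) (hβB : 0 ≤ βB)
    (hx : x ≤ x') (hy : y ≤ y') :
    survEvent SA SB βA βB x' y' ⊆ survEvent SA SB βA βB x y := by
  intro ω hω
  simp only [survEvent, Set.mem_inter_iff, Set.mem_setOf_eq] at hω ⊢
  obtain ⟨h1, h2⟩ := hω
  exact ⟨lt_of_le_of_lt (by nlinarith) h1, lt_of_le_of_lt (by nlinarith) h2⟩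

lemma survEvent_meas {SA SB : Ω → ℝ} (hSA : Measurable SA) (hSB : Measurable SB)
    (βA βB x y : ℝ) : MeasurableSet (survEvent SA SB βA βB x y) :=
  (measurableSet_lt measurable_const hSA).inter (measurableSet_lt measurable_const hSB)

lemma key (L : Ω → ℝ) [IsProbabilityMeasure (ℙ : Measure Ω)]
    (hL0 : ∀ ω, 0 ≤ L ω) (hL : Integrable L (ℙ : Measure Ω))
    {E E' : Set Ω} (hE' : MeasurableSet E') (hsub : E' ⊆ E)
    (hP' : 0 < (ℙ : Measure Ω) E') {c : ℝ} (hc0 : 0 < c) (hc1 : c ≤ 1) :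
    ((∫ ω, L ω) - c * ∫ ω in E, L ω) / (c * ((ℙ : Measure Ω) E).toReal) ≤
      ((∫ ω, L ω) - c * ∫ ω in E', L ω) / (c * ((ℙ : Measure Ω) E').toReal) := by
  set μ := (∫ ω, L ω) with hμ
  have hnn : 0 ≤ᵐ[(ℙ : Measure Ω)] L := Filter.Eventually.of_forall hL0
  have hIE' : (0:ℝ) ≤ ∫ ω in E', L ω := setIntegral_nonneg hE' (fun ω _ => hL0 ω)
  have hII : (∫ ω in E', L ω) ≤ ∫ ω in E, L ω :=
    setIntegral_mono_set hL.integrableOn (ae_restrict_of_ae hnn)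
      (Filter.Eventually.of_forall hsub)
  have hIμ : (∫ ω in E, L ω) ≤ μ := setIntegral_le_integral hL hnn
  have hPE'fin : (ℙ : Measure Ω) E' ≠ ⊤ := measure_ne_top _ _
  have hP'r : 0 < ((ℙ : Measure Ω) E').toReal := ENNReal.toReal_pos hP'.ne' hPE'fin
  have hPP : ((ℙ : Measure Ω) E').toReal ≤ ((ℙ : Measure Ω) E).toReal :=
    ENNReal.toReal_mono (measure_ne_top _ _) (measure_mono hsub)
  have hPE1 : ((ℙ : Measure Ω) E).toReal ≤ 1 := by
    simpa using ENNReal.toReal_mono (by simp) (prob_le_one (μ := (ℙ : Measure Ω)) (s := E))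
  have hPr : 0 < ((ℙ : Measure Ω) E).toReal := lt_of_lt_of_le hP'r hPP
  rw [div_le_div_iff₀ (by positivity) (by positivity)]
  have hnum' : 0 ≤ μ - c * ∫ ω in E', L ω := by nlinarith
  calc (μ - c * ∫ ω in E, L ω) * (c * ((ℙ : Measure Ω) E').toReal)
      ≤ (μ - c * ∫ ω in E', L ω) * (c * ((ℙ : Measure Ω) E').toReal) :=
        mul_le_mul_of_nonneg_right (by nlinarith) (by positivity)
    _ ≤ (μ - c * ∫ ω in E', L ω) * (c * ((ℙ : Measure Ω) E).toReal) :=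
        mul_le_mul_of_nonneg_left (by nlinarith) hnum'

theorem stmt2 [IsProbabilityMeasure (ℙ : Measure Ω)]
    (LA LB SA SB : Ω → ℝ)
    (hLA0 : ∀ ω, 0 ≤ LA ω) (hLB0 : ∀ ω, 0 ≤ LB ω)
    (hLA : Integrable LA (ℙ : Measure Ω)) (hLB : Integrable LB (ℙ : Measure Ω))
    (hSA : Measurable SA) (hSB : Measurable SB)
    (βA βB : ℝ) (hβA : 0 ≤ βA) (hβB : 0 ≤ βB)
    (p : ℝ) (hp0 : 0 < p) (hp1 : p < 1)
    (a₁ b₁ a₂ b₂ : ℝ)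
    (hP₁ : (a₁, b₁) ∈ stableSet LA LB SA SB βA βB p)
    (hP₂ : (a₂, b₂) ∈ stableSet LA LB SA SB βA βB p) :
    (min a₁ a₂, min b₁ b₂) ∈ stableSet LA LB SA SB βA βB p := by
  obtain ⟨ha₁, hb₁, hE₁, hg₁, hh₁⟩ := hP₁
  obtain ⟨ha₂, hb₂, hE₂, hg₂, hh₂⟩ := hP₂
  have hc0 : (0:ℝ) < 1 - p := by linarith
  have hc1 : (1:ℝ) - p ≤ 1 := by linarith
  set x := min a₁ a₂
  set y := min b₁ b₂
  have hsub₁ : survEvent SA SB βA βB a₁ b₁ ⊆ survEvent SA SB βA βB x y :=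
    survEvent_mono SA SB hβA hβB (min_le_left _ _) (min_le_left _ _)
  have hsub₂ : survEvent SA SB βA βB a₂ b₂ ⊆ survEvent SA SB βA βB x y :=
    survEvent_mono SA SB hβA hβB (min_le_right _ _) (min_le_right _ _)
  have hE₃ : 0 < (ℙ : Measure Ω) (survEvent SA SB βA βB x y) :=
    lt_of_lt_of_le hE₁ (measure_mono hsub₁)
  refine ⟨le_min ha₁ ha₂, le_min hb₁ hb₂, hE₃, ?_, ?_⟩
  · rcases min_cases a₁ a₂ with ⟨hx, _⟩ | ⟨hx, _⟩
    · calc gFun LA SA SB βA βB p x y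
          ≤ gFun LA SA SB βA βB p a₁ b₁ :=
            key LA hLA0 hLA (survEvent_meas hSA hSB βA βB a₁ b₁) hsub₁ hE₁ hc0 hc1
        _ ≤ a₁ := hg₁
        _ = x := hx.symm
    · calc gFun LA SA SB βA βB p x y
          ≤ gFun LA SA SB βA βB p a₂ b₂ :=
            key LA hLA0 hLA (survEvent_meas hSA hSB βA βB a₂ b₂) hsub₂ hE₂ hc0 hc1
        _ ≤ a₂ := hg₂
        _ = x := hx.symm
  · rcases min_cases b₁ b₂ with ⟨hy, _⟩ | ⟨hy, _⟩
    · calc gFun LB SA SB βA βB p x y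
          ≤ gFun LB SA SB βA βB p a₁ b₁ :=
            key LB hLB0 hLB (survEvent_meas hSA hSB βA βB a₁ b₁) hsub₁ hE₁ hc0 hc1
        _ ≤ b₁ := hh₁
        _ = y := hy.symm
    · calc gFun LB SA SB βA βB p x y
          ≤ gFun LB SA SB βA βB p a₂ b₂ :=
            key LB hLB0 hLB (survEvent_meas hSA hSB βA βB a₂ b₂) hsub₂ hE₂ hc0 hc1
        _ ≤ b₂ := hh₂
        _ = y := hy.symm
end

section
/- (Lemma 1 of the paper, made precise.) Let (x₁,y₁) with x₁, y₁ ≥ 0 and ℙ[E(x₁,y₁)] > 0, and set (x₂,y₂) = (g(x₁,y₁), h(x₁,y₁)). If x₁ ≤ x₂, y₁ ≤ y₂, and ℙ[E(x₂,y₂)] = ℙ[E(x₁,y₁)] (the stopping condition), then g(x₂,y₂) = x₂ and h(x₂,y₂) = y₂; in particular (x₂,y₂) is a stable point, i.e., (x₂,y₂) ∈ 𝒫. -/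
open MeasureTheory ProbabilityTheory

variable {Ω : Type*} [MeasureSpace Ω]

theorem stmt5 [IsProbabilityMeasure (ℙ : Measure Ω)]
    (LA LB SA SB : Ω → ℝ)
    (hLA0 : ∀ ω, 0 ≤ LA ω) (hLB0 : ∀ ω, 0 ≤ LB ω)
    (hLA : Integrable LA (ℙ : Measure Ω)) (hLB : Integrable LB (ℙ : Measure Ω))
    (hSA : Measurable SA) (hSB : Measurable SB)
    (βA βB : ℝ) (hβA : 0 ≤ βA) (hβB : 0 ≤ βB)
    (p : ℝ) (hp0 : 0 < p) (hp1 : p < 1)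
    (x₁ y₁ : ℝ) (hx₁ : 0 ≤ x₁) (hy₁ : 0 ≤ y₁)
    (hpos : 0 < (ℙ : Measure Ω) (survEvent SA SB βA βB x₁ y₁))
    (x₂ y₂ : ℝ)
    (hx₂ : x₂ = gFun LA SA SB βA βB p x₁ y₁)
    (hy₂ : y₂ = gFun LB SA SB βA βB p x₁ y₁)
    (hx : x₁ ≤ x₂) (hy : y₁ ≤ y₂)
    (hstop : (ℙ : Measure Ω) (survEvent SA SB βA βB x₂ y₂) =
      (ℙ : Measure Ω) (survEvent SA SB βA βB x₁ y₁)) :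
    gFun LA SA SB βA βB p x₂ y₂ = x₂ ∧ gFun LB SA SB βA βB p x₂ y₂ = y₂ ∧
    (x₂, y₂) ∈ stableSet LA LB SA SB βA βB p := by
  have hsub : survEvent SA SB βA βB x₂ y₂ ⊆ survEvent SA SB βA βB x₁ y₁ := by
    rintro ω ⟨h1, h2⟩
    simp only [Set.mem_setOf_eq] at h1 h2
    refine ⟨?_, ?_⟩ <;> simp only [Set.mem_setOf_eq] <;> nlinarith
  have hae : survEvent SA SB βA βB x₂ y₂ =ᵐ[(ℙ : Measure Ω)]
      survEvent SA SB βA βB x₁ y₁ :=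
    ae_eq_of_subset_of_measure_ge hsub hstop.ge
      ((hSA measurableSet_Ioi).inter (hSB measurableSet_Ioi)).nullMeasurableSet
      (measure_ne_top _ _)
  have hgeq : ∀ L : Ω → ℝ, gFun L SA SB βA βB p x₂ y₂ = gFun L SA SB βA βB p x₁ y₁ := by
    intro L
    unfold gFun
    rw [setIntegral_congr_set hae, hstop]
  have hgx : gFun LA SA SB βA βB p x₂ y₂ = x₂ := by rw [hgeq, hx₂]
  have hgy : gFun LB SA SB βA βB p x₂ y₂ = y₂ := by rw [hgeq, hy₂]
  refine ⟨hgx, hgy, le_trans hx₁ hx, le_trans hy₁ hy, ?_, hgx.le, hgy.le⟩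
  rw [hstop]; exact hpos
end

section
/- (Theorem 3(i) of the paper.) Suppose 𝔼[L_A] > 0, 𝔼[L_B] > 0, and 𝔼[S_A] + 𝔼[S_B] = S_total with S_total > 0. Define the single-layer critical attack sizes p_A = 𝔼[S_A]/(𝔼[S_A] + 𝔼[L_A] + β_B·𝔼[L_B]) and p_B = 𝔼[S_B]/(𝔼[S_B] + 𝔼[L_B] + β_A·𝔼[L_A]). Then min(p_A, p_B) ≤ p*_opt := S_total/(S_total + (1+β_A)·𝔼[L_A] + (1+β_B)·𝔼[L_B]), with equality if and only if 𝔼[S_A] = S_total·(𝔼[L_A] + β_B·𝔼[L_B])/((1+β_A)·𝔼[L_A] + (1+β_B)·𝔼[L_B]). -/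
open MeasureTheory ProbabilityTheory

variable {Ω : Type*} [MeasureSpace Ω]

theorem stmt10 [IsProbabilityMeasure (ℙ : Measure Ω)]
    (LA LB SA SB : Ω → ℝ)
    (hLA0 : ∀ ω, 0 ≤ LA ω) (hLB0 : ∀ ω, 0 ≤ LB ω)
    (hSA0 : ∀ ω, 0 ≤ SA ω) (hSB0 : ∀ ω, 0 ≤ SB ω)
    (hLA : Integrable LA (ℙ : Measure Ω)) (hLB : Integrable LB (ℙ : Measure Ω))
    (hSA : Integrable SA (ℙ : Measure Ω)) (hSB : Integrable SB (ℙ : Measure Ω))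
    (βA βB : ℝ) (hβA : 0 ≤ βA) (hβB : 0 ≤ βB)
    (hLApos : 0 < ∫ ω, LA ω) (hLBpos : 0 < ∫ ω, LB ω)
    (Stot : ℝ) (hStot : 0 < Stot)
    (hsum : (∫ ω, SA ω) + (∫ ω, SB ω) = Stot)
    (pA pB popt : ℝ)
    (hpA : pA = (∫ ω, SA ω) / ((∫ ω, SA ω) + (∫ ω, LA ω) + βB * ∫ ω, LB ω))
    (hpB : pB = (∫ ω, SB ω) / ((∫ ω, SB ω) + (∫ ω, LB ω) + βA * ∫ ω, LA ω))
    (hpopt : popt = Stot / (Stot + (1 + βA) * (∫ ω, LA ω) + (1 + βB) * ∫ ω, LB ω)) :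
    min pA pB ≤ popt ∧
    (min pA pB = popt ↔
      (∫ ω, SA ω) = Stot * ((∫ ω, LA ω) + βB * ∫ ω, LB ω) /
        ((1 + βA) * (∫ ω, LA ω) + (1 + βB) * ∫ ω, LB ω)) := by

  set a := ∫ ω, SA ω with hadef
  set b := ∫ ω, SB ω with hbdef
  set lA := ∫ ω, LA ω with hlAdef
  set lB := ∫ ω, LB ω with hlBdef
  have ha : 0 ≤ a := integral_nonneg hSA0
  have hb : 0 ≤ b := integral_nonneg hSB0
  have hbAlA : 0 ≤ βA * lA := mul_nonneg hβA hLApos.le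
  have hbBlB : 0 ≤ βB * lB := mul_nonneg hβB hLBpos.le
  have hcA : 0 < lA + βB * lB := by linarith
  have hcB : 0 < lB + βA * lA := by linarith
  have hC : 0 < (1 + βA) * lA + (1 + βB) * lB := by nlinarith
  have hdA : 0 < a + lA + βB * lB := by linarith
  have hdB : 0 < b + lB + βA * lA := by linarith
  have hdP : 0 < Stot + (1 + βA) * lA + (1 + βB) * lB := by linarith
  have hb2 : b = Stot - a := by linarith
  have h1 : pA ≤ popt ↔ a * ((1 + βA) * lA + (1 + βB) * lB) ≤ Stot * (lA + βB * lB) := by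
    rw [hpA, hpopt, div_le_div_iff₀ hdA hdP]
    constructor <;> intro h <;> linarith
  have h1' : popt ≤ pA ↔ Stot * (lA + βB * lB) ≤ a * ((1 + βA) * lA + (1 + βB) * lB) := by
    rw [hpA, hpopt, div_le_div_iff₀ hdP hdA]
    constructor <;> intro h <;> linarith
  have h2 : pB ≤ popt ↔ Stot * (lA + βB * lB) ≤ a * ((1 + βA) * lA + (1 + βB) * lB) := by
    rw [hpB, hpopt, div_le_div_iff₀ hdB hdP, hb2]
    constructor <;> intro h <;> linarith
  have h2' : popt ≤ pB ↔ a * ((1 + βA) * lA + (1 + βB) * lB) ≤ Stot * (lA + βB * lB) := by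
    rw [hpB, hpopt, div_le_div_iff₀ hdP hdB, hb2]
    constructor <;> intro h <;> linarith
  constructor
  · rcases le_total (a * ((1 + βA) * lA + (1 + βB) * lB)) (Stot * (lA + βB * lB)) with h | h
    · exact le_trans (min_le_left _ _) (h1.mpr h)
    · exact le_trans (min_le_right _ _) (h2.mpr h)
  · rw [eq_div_iff hC.ne']
    constructor
    · intro hmin
      have hA : popt ≤ pA := hmin ▸ min_le_left pA pB
      have hB : popt ≤ pB := hmin ▸ min_le_right pA pB
      have := h1'.mp hA
      have := h2'.mp hB
      linarith
    · intro heq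
      have e1 : pA = popt := le_antisymm (h1.mpr (le_of_eq heq)) (h1'.mpr (ge_of_eq heq))
      have e2 : pB = popt := le_antisymm (h2.mpr (ge_of_eq heq)) (h2'.mpr (le_of_eq heq))
      rw [e1, e2, min_self]
end

section
/- (Theorem 3(ii)–(iii), survival part.) Suppose 𝔼[L_A] > 0, 𝔼[L_B] > 0, and set a = 𝔼[L_A] + β_B·𝔼[L_B], b = 𝔼[L_B] + β_A·𝔼[L_A]. Fix S_total > 0 and let s_A = S_total·a/(a+b), s_B = S_total·b/(a+b), p*_opt = S_total/(S_total + a + b). Assume the layer-weighted equal free space allocation: S_A = s_A almost surely and S_B = s_B almost surely. Then for every attack size p with 0 < p < p*_opt, the point (x₀,y₀) = ( p·𝔼[L_A]/(1−p), p·𝔼[L_B]/(1−p) ) satisfies ℙ[E(x₀,y₀)] = 1, g(x₀,y₀) = x₀, and h(x₀,y₀) = y₀; in particular (x₀,y₀) ∈ 𝒫 and (1−p)·ℙ[E(x₀,y₀)] = 1−p (no failures occur beyond the initial attack). -/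
/-!
Under the layer-weighted allocation the initial attack forces every surviving node of layer A
to absorb the extra load `x₀ + β_B·y₀ = p·a/(1−p)`, and of layer B `y₀ + β_A·x₀ = p·b/(1−p)`.
Since `p < p*_opt` is equivalent to `p·(a+b) < S_total·(1−p)`, both are strictly below the
allotted free spaces `s_A`, `s_B`, so the survival event is almost sure; then `g` and `h`
collapse to `p·𝔼[L]/(1−p)`, which makes `(x₀, y₀)` a fixed point.
-/

open MeasureTheory ProbabilityTheory

variable {Ω : Type*} [MeasureSpace Ω]

section Arithmetic

variable {a b c S p : ℝ}

theorem lt_one_of_lt_div_add (hS : 0 < S) (hab : 0 < a + b) (hp : p < S / (S + a + b)) :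
    p < 1 :=
  hp.trans <| (div_lt_one (by linarith)).mpr (by linarith)

theorem mul_div_one_sub_lt_mul_div (hS : 0 < S) (hab : 0 < a + b) (hc : 0 < c)
    (hp : p < S / (S + a + b)) :
    p * c / (1 - p) < S * c / (a + b) := by
  have h1p : 0 < 1 - p := sub_pos.mpr (lt_one_of_lt_div_add hS hab hp)
  have hsum : p * (a + b) < S * (1 - p) := by
    have := (lt_div_iff₀ (by linarith : 0 < S + a + b)).mp hp
    linarith
  rw [div_lt_div_iff₀ h1p hab]
  nlinarith [mul_lt_mul_of_pos_left hsum hc]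

end Arithmetic

theorem survEvent_ae_eq_univ {μ : Measure Ω} {SA SB : Ω → ℝ} {βA βB x y sA sB : ℝ}
    (hSA : ∀ᵐ ω ∂μ, SA ω = sA) (hSB : ∀ᵐ ω ∂μ, SB ω = sB)
    (hA : x + βB * y < sA) (hB : y + βA * x < sB) :
    survEvent SA SB βA βB x y =ᵐ[μ] Set.univ := by
  rw [Filter.eventuallyEq_univ]
  filter_upwards [hSA, hSB] with ω hωA hωB
  exact ⟨show x + βB * y < SA ω by rw [hωA]; exact hA,
    show y + βA * x < SB ω by rw [hωB]; exact hB⟩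

theorem gFun_eq_of_survEvent_ae_eq_univ [IsProbabilityMeasure (ℙ : Measure Ω)]
    (L SA SB : Ω → ℝ) {βA βB p x y : ℝ}
    (hE : survEvent SA SB βA βB x y =ᵐ[(ℙ : Measure Ω)] Set.univ) (hp : p ≠ 1) :
    gFun L SA SB βA βB p x y = p * (∫ ω, L ω) / (1 - p) := by
  have h1p : 1 - p ≠ 0 := sub_ne_zero.mpr hp.symm
  rw [gFun, setIntegral_congr_set hE, setIntegral_univ, measure_congr hE, measure_univ,
    ENNReal.toReal_one, mul_one]
  field_simp
  ring

theorem stmt13_general [IsProbabilityMeasure (ℙ : Measure Ω)]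
    (LA LB SA SB : Ω → ℝ)
    (βA βB : ℝ) (hβA : 0 ≤ βA) (hβB : 0 ≤ βB)
    (hLApos : 0 < ∫ ω, LA ω) (hLBpos : 0 < ∫ ω, LB ω)
    (a b : ℝ)
    (ha : a = (∫ ω, LA ω) + βB * ∫ ω, LB ω)
    (hb : b = (∫ ω, LB ω) + βA * ∫ ω, LA ω)
    (Stot : ℝ) (hStot : 0 < Stot)
    (sA sB popt : ℝ)
    (hsA : sA = Stot * a / (a + b)) (hsB : sB = Stot * b / (a + b))
    (hpopt : popt = Stot / (Stot + a + b))
    (hSA : ∀ᵐ ω ∂(ℙ : Measure Ω), SA ω = sA)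
    (hSB : ∀ᵐ ω ∂(ℙ : Measure Ω), SB ω = sB)
    (p : ℝ) (hp0 : 0 < p) (hpo : p < popt)
    (x₀ y₀ : ℝ)
    (hx₀ : x₀ = p * (∫ ω, LA ω) / (1 - p))
    (hy₀ : y₀ = p * (∫ ω, LB ω) / (1 - p)) :
    (ℙ : Measure Ω) (survEvent SA SB βA βB x₀ y₀) = 1 ∧
    gFun LA SA SB βA βB p x₀ y₀ = x₀ ∧
    gFun LB SA SB βA βB p x₀ y₀ = y₀ ∧
    (x₀, y₀) ∈ stableSet LA LB SA SB βA βB p ∧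
    (1 - p) * ((ℙ : Measure Ω) (survEvent SA SB βA βB x₀ y₀)).toReal = 1 - p := by
  subst hpopt hsA hsB
  have hapos : 0 < a := by rw [ha]; positivity
  have hbpos : 0 < b := by rw [hb]; positivity
  have hab : 0 < a + b := by positivity
  have hp1 : p < 1 := lt_one_of_lt_div_add hStot hab hpo
  have hloadA : x₀ + βB * y₀ = p * a / (1 - p) := by rw [hx₀, hy₀, ha]; ring
  have hloadB : y₀ + βA * x₀ = p * b / (1 - p) := by rw [hx₀, hy₀, hb]; ring
  have hE : survEvent SA SB βA βB x₀ y₀ =ᵐ[(ℙ : Measure Ω)] Set.univ :=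
    survEvent_ae_eq_univ hSA hSB
      (hloadA ▸ mul_div_one_sub_lt_mul_div hStot hab hapos hpo)
      (hloadB ▸ mul_div_one_sub_lt_mul_div hStot hab hbpos hpo)
  have hE1 : (ℙ : Measure Ω) (survEvent SA SB βA βB x₀ y₀) = 1 := by
    rw [measure_congr hE, measure_univ]
  have hg : gFun LA SA SB βA βB p x₀ y₀ = x₀ :=
    (gFun_eq_of_survEvent_ae_eq_univ LA SA SB hE hp1.ne).trans hx₀.symm
  have hh : gFun LB SA SB βA βB p x₀ y₀ = y₀ :=
    (gFun_eq_of_survEvent_ae_eq_univ LB SA SB hE hp1.ne).trans hy₀.symm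
  have hx0 : 0 ≤ x₀ := by rw [hx₀]; exact div_nonneg (by positivity) (by linarith)
  have hy0 : 0 ≤ y₀ := by rw [hy₀]; exact div_nonneg (by positivity) (by linarith)
  exact ⟨hE1, hg, hh, ⟨hx0, hy0, by simp [hE1], hg.le, hh.le⟩, by simp [hE1]⟩

theorem stmt13 [IsProbabilityMeasure (ℙ : Measure Ω)]
    (LA LB SA SB : Ω → ℝ)
    (hLA0 : ∀ ω, 0 ≤ LA ω) (hLB0 : ∀ ω, 0 ≤ LB ω)
    (hLA : Integrable LA (ℙ : Measure Ω)) (hLB : Integrable LB (ℙ : Measure Ω))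
    (hSAm : Measurable SA) (hSBm : Measurable SB)
    (βA βB : ℝ) (hβA : 0 ≤ βA) (hβB : 0 ≤ βB)
    (hLApos : 0 < ∫ ω, LA ω) (hLBpos : 0 < ∫ ω, LB ω)
    (a b : ℝ)
    (ha : a = (∫ ω, LA ω) + βB * ∫ ω, LB ω)
    (hb : b = (∫ ω, LB ω) + βA * ∫ ω, LA ω)
    (Stot : ℝ) (hStot : 0 < Stot)
    (sA sB popt : ℝ)
    (hsA : sA = Stot * a / (a + b)) (hsB : sB = Stot * b / (a + b))
    (hpopt : popt = Stot / (Stot + a + b))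
    (hSA : ∀ᵐ ω ∂(ℙ : Measure Ω), SA ω = sA)
    (hSB : ∀ᵐ ω ∂(ℙ : Measure Ω), SB ω = sB)
    (p : ℝ) (hp0 : 0 < p) (hpo : p < popt)
    (x₀ y₀ : ℝ)
    (hx₀ : x₀ = p * (∫ ω, LA ω) / (1 - p))
    (hy₀ : y₀ = p * (∫ ω, LB ω) / (1 - p)) :
    (ℙ : Measure Ω) (survEvent SA SB βA βB x₀ y₀) = 1 ∧
    gFun LA SA SB βA βB p x₀ y₀ = x₀ ∧
    gFun LB SA SB βA βB p x₀ y₀ = y₀ ∧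
    (x₀, y₀) ∈ stableSet LA LB SA SB βA βB p ∧
    (1 - p) * ((ℙ : Measure Ω) (survEvent SA SB βA βB x₀ y₀)).toReal = 1 - p :=
  stmt13_general LA LB SA SB βA βB hβA hβB hLApos hLBpos a b ha hb Stot hStot sA sB popt hsA hsB
    hpopt hSA hSB p hp0 hpo x₀ y₀ hx₀ hy₀
end

section
/- (Theorem 4 of the paper, survival part.) Suppose 𝔼[L_A] > 0, 𝔼[L_B] > 0, and set a = 𝔼[L_A] + β_B·𝔼[L_B], b = 𝔼[L_B] + β_A·𝔼[L_A]. Fix constants μ_A, μ_B > 0 and define p_A = μ_A/(μ_A + a) and p_B = μ_B/(μ_B + b). Assume the equal free space allocation: S_A = μ_A almost surely and S_B = μ_B almost surely. Then for every attack size p with 0 < p < min(p_A, p_B), the point (x₀,y₀) = ( p·𝔼[L_A]/(1−p), p·𝔼[L_B]/(1−p) ) satisfies x₀ + β_B·y₀ < μ_A, y₀ + β_A·x₀ < μ_B, ℙ[E(x₀,y₀)] = 1, g(x₀,y₀) = x₀, and h(x₀,y₀) = y₀; in particular (x₀,y₀) ∈ 𝒫 and no failures occur beyond the initial attack. -/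
open MeasureTheory ProbabilityTheory

variable {Ω : Type*} [MeasureSpace Ω]

theorem stmt15 [IsProbabilityMeasure (ℙ : Measure Ω)]
    (LA LB SA SB : Ω → ℝ)
    (hLA0 : ∀ ω, 0 ≤ LA ω) (hLB0 : ∀ ω, 0 ≤ LB ω)
    (hLA : Integrable LA (ℙ : Measure Ω)) (hLB : Integrable LB (ℙ : Measure Ω))
    (hSAm : Measurable SA) (hSBm : Measurable SB)
    (βA βB : ℝ) (hβA : 0 ≤ βA) (hβB : 0 ≤ βB)
    (hLApos : 0 < ∫ ω, LA ω) (hLBpos : 0 < ∫ ω, LB ω)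
    (a b : ℝ)
    (ha : a = (∫ ω, LA ω) + βB * ∫ ω, LB ω)
    (hb : b = (∫ ω, LB ω) + βA * ∫ ω, LA ω)
    (μA μB : ℝ) (hμA : 0 < μA) (hμB : 0 < μB)
    (pA pB : ℝ) (hpA : pA = μA / (μA + a)) (hpB : pB = μB / (μB + b))
    (hSA : ∀ᵐ ω ∂(ℙ : Measure Ω), SA ω = μA)
    (hSB : ∀ᵐ ω ∂(ℙ : Measure Ω), SB ω = μB)
    (p : ℝ) (hp0 : 0 < p) (hpo : p < min pA pB)
    (x₀ y₀ : ℝ)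
    (hx₀ : x₀ = p * (∫ ω, LA ω) / (1 - p))
    (hy₀ : y₀ = p * (∫ ω, LB ω) / (1 - p)) :
    x₀ + βB * y₀ < μA ∧ y₀ + βA * x₀ < μB ∧
    (ℙ : Measure Ω) (survEvent SA SB βA βB x₀ y₀) = 1 ∧
    gFun LA SA SB βA βB p x₀ y₀ = x₀ ∧
    gFun LB SA SB βA βB p x₀ y₀ = y₀ ∧
    (x₀, y₀) ∈ stableSet LA LB SA SB βA βB p := by

  have hIA := hLApos
  have hIB := hLBpos
  have hapos : 0 < a := by
    rw [ha]; positivity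
  have hbpos : 0 < b := by
    rw [hb]; positivity
  have hpA1 : pA < 1 := by
    rw [hpA]; rw [div_lt_one (by linarith)]; linarith
  have hppA : p < pA := lt_of_lt_of_le hpo (min_le_left _ _)
  have hppB : p < pB := lt_of_lt_of_le hpo (min_le_right _ _)
  have hp1 : p < 1 := lt_trans hppA hpA1
  have h1p : 0 < 1 - p := by linarith
  -- first inequality
  have hxa : x₀ + βB * y₀ = p * a / (1 - p) := by
    rw [hx₀, hy₀, ha]; field_simp
  have hyb : y₀ + βA * x₀ = p * b / (1 - p) := by
    rw [hy₀, hx₀, hb]; field_simp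
  have h1 : x₀ + βB * y₀ < μA := by
    rw [hxa, div_lt_iff₀ h1p]
    have : p * (μA + a) < μA := by
      have := hppA
      rw [hpA, lt_div_iff₀ (by linarith)] at this
      linarith
    nlinarith
  have h2 : y₀ + βA * x₀ < μB := by
    rw [hyb, div_lt_iff₀ h1p]
    have hpB1 : pB = μB / (μB + b) := hpB
    have : p * (μB + b) < μB := by
      have := hppB
      rw [hpB, lt_div_iff₀ (by linarith)] at this
      linarith
    nlinarith
  -- the event holds almost surely
  have hae : ∀ᵐ ω ∂(ℙ : Measure Ω), ω ∈ survEvent SA SB βA βB x₀ y₀ := by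
    filter_upwards [hSA, hSB] with ω hA hB
    exact ⟨by simpa [hA] using h1, by simpa [hB] using h2⟩
  have hEuniv : survEvent SA SB βA βB x₀ y₀ =ᵐ[(ℙ : Measure Ω)] (Set.univ : Set Ω) :=
    Filter.eventuallyEq_univ.mpr hae
  have h3 : (ℙ : Measure Ω) (survEvent SA SB βA βB x₀ y₀) = 1 := by
    rw [measure_congr hEuniv, measure_univ]
  have hsetA : (∫ ω in survEvent SA SB βA βB x₀ y₀, LA ω) = ∫ ω, LA ω := by
    rw [setIntegral_congr_set hEuniv, setIntegral_univ]
  have hsetB : (∫ ω in survEvent SA SB βA βB x₀ y₀, LB ω) = ∫ ω, LB ω := by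
    rw [setIntegral_congr_set hEuniv, setIntegral_univ]
  have h4 : gFun LA SA SB βA βB p x₀ y₀ = x₀ := by
    rw [gFun, hsetA, h3, hx₀]
    simp only [ENNReal.toReal_one, mul_one]
    ring_nf
  have h5 : gFun LB SA SB βA βB p x₀ y₀ = y₀ := by
    rw [gFun, hsetB, h3, hy₀]
    simp only [ENNReal.toReal_one, mul_one]
    ring_nf
  have hx0 : 0 ≤ x₀ := by rw [hx₀]; positivity
  have hy0 : 0 ≤ y₀ := by rw [hy₀]; positivity
  exact ⟨h1, h2, h3, h4, h5, hx0, hy0, by rw [h3]; norm_num, h4.le, h5.le⟩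
end

section
/- (Theorem 4 of the paper, collapse part.) Suppose 𝔼[L_A] > 0, 𝔼[L_B] > 0, and set a = 𝔼[L_A] + β_B·𝔼[L_B], b = 𝔼[L_B] + β_A·𝔼[L_A]. Fix constants μ_A, μ_B > 0 and define p_A = μ_A/(μ_A + a) and p_B = μ_B/(μ_B + b). Assume S_A = μ_A almost surely and S_B = μ_B almost surely. Then for every attack size p with min(p_A, p_B) < p < 1, the set of stable points is empty: 𝒫 = ∅. -/
open MeasureTheory ProbabilityTheory

variable {Ω : Type*} [MeasureSpace Ω]

set_option maxHeartbeats 1000000 in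
theorem stmt16 [IsProbabilityMeasure (ℙ : Measure Ω)]
    (LA LB SA SB : Ω → ℝ)
    (hLA0 : ∀ ω, 0 ≤ LA ω) (hLB0 : ∀ ω, 0 ≤ LB ω)
    (hLA : Integrable LA (ℙ : Measure Ω)) (hLB : Integrable LB (ℙ : Measure Ω))
    (hSAm : Measurable SA) (hSBm : Measurable SB)
    (βA βB : ℝ) (hβA : 0 ≤ βA) (hβB : 0 ≤ βB)
    (hLApos : 0 < ∫ ω, LA ω) (hLBpos : 0 < ∫ ω, LB ω)
    (a b : ℝ)
    (ha : a = (∫ ω, LA ω) + βB * ∫ ω, LB ω)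
    (hb : b = (∫ ω, LB ω) + βA * ∫ ω, LA ω)
    (μA μB : ℝ) (hμA : 0 < μA) (hμB : 0 < μB)
    (pA pB : ℝ) (hpA : pA = μA / (μA + a)) (hpB : pB = μB / (μB + b))
    (hSA : ∀ᵐ ω ∂(ℙ : Measure Ω), SA ω = μA)
    (hSB : ∀ᵐ ω ∂(ℙ : Measure Ω), SB ω = μB)
    (p : ℝ) (hpo : min pA pB < p) (hp1 : p < 1) :
    stableSet LA LB SA SB βA βB p = ∅ := by

  ext q
  simp only [Set.mem_empty_iff_false, iff_false]
  rintro ⟨hx0, hy0, hpos, hgx, hgy⟩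
  obtain ⟨x, y⟩ := q
  simp only at hx0 hy0 hpos hgx hgy
  set E := survEvent SA SB βA βB x y with hE
  have hp' : 0 < 1 - p := by linarith
  -- strict inequalities
  have hxA : x + βB * y < μA := by
    by_contra hcon
    push_neg at hcon
    have h0 : (ℙ : Measure Ω) E = 0 := by
      rw [measure_eq_zero_iff_ae_notMem]
      filter_upwards [hSA] with ω hω
      intro hmem
      have := hmem.1
      simp only [Set.mem_setOf_eq] at this
      rw [hω] at this
      linarith
    rw [h0] at hpos; exact lt_irrefl 0 hpos
  have hyB : y + βA * x < μB := by
    by_contra hcon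
    push_neg at hcon
    have h0 : (ℙ : Measure Ω) E = 0 := by
      rw [measure_eq_zero_iff_ae_notMem]
      filter_upwards [hSB] with ω hω
      intro hmem
      have := hmem.2
      simp only [Set.mem_setOf_eq] at this
      rw [hω] at this
      linarith
    rw [h0] at hpos; exact lt_irrefl 0 hpos
  -- E is a.e. the whole space
  have hEuniv : E =ᵐ[(ℙ : Measure Ω)] (Set.univ : Set Ω) := by
    rw [Filter.eventuallyEq_set]
    filter_upwards [hSA, hSB] with ω hωA hωB
    simp only [Set.mem_univ, iff_true]
    exact ⟨by simp only [Set.mem_setOf_eq]; rw [hωA]; exact hxA,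
           by simp only [Set.mem_setOf_eq]; rw [hωB]; exact hyB⟩
  have hP1 : ((ℙ : Measure Ω) E).toReal = 1 := by
    rw [measure_congr hEuniv, measure_univ, ENNReal.toReal_one]
  have hintA : ∫ ω in E, LA ω = ∫ ω, LA ω := by
    rw [setIntegral_congr_set hEuniv, setIntegral_univ]
  have hintB : ∫ ω in E, LB ω = ∫ ω, LB ω := by
    rw [setIntegral_congr_set hEuniv, setIntegral_univ]
  have hgAval : gFun LA SA SB βA βB p x y = p * (∫ ω, LA ω) / (1 - p) := by
    rw [gFun, ← hE, hintA, hP1]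
    field_simp
    ring
  have hgBval : gFun LB SA SB βA βB p x y = p * (∫ ω, LB ω) / (1 - p) := by
    rw [gFun, ← hE, hintB, hP1]
    field_simp
    ring
  rw [hgAval] at hgx
  rw [hgBval] at hgy
  have hxge : p * (∫ ω, LA ω) ≤ (1 - p) * x := by
    rw [div_le_iff₀ hp'] at hgx; linarith
  have hyge : p * (∫ ω, LB ω) ≤ (1 - p) * y := by
    rw [div_le_iff₀ hp'] at hgy; linarith
  have hap : 0 < μA + a := by rw [ha]; nlinarith
  have hbp : 0 < μB + b := by rw [hb]; nlinarith
  have hpltA : p < pA := by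
    rw [hpA, lt_div_iff₀ hap]
    -- p * a < (1 - p) * μA follows from x + βB*y < μA
    have h1 : p * a ≤ (1 - p) * (x + βB * y) := by
      rw [ha]
      nlinarith [mul_le_mul_of_nonneg_left hyge hβB]
    nlinarith [mul_lt_mul_of_pos_left hxA hp']
  have hpltB : p < pB := by
    rw [hpB, lt_div_iff₀ hbp]
    have h1 : p * b ≤ (1 - p) * (y + βA * x) := by
      rw [hb]
      nlinarith [mul_le_mul_of_nonneg_left hxge hβA]
    nlinarith [mul_lt_mul_of_pos_left hyB hp']
  have : p < min pA pB := lt_min hpltA hpltB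
  linarith
end
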